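/- Let λ, μ ∈ ℂ. There exist an sl₂-module E on which h acts semisimply (E is spanned by h-eigenvectors), an injective sl₂-module homomorphism i : V(λ) → E, and a surjective sl₂-module homomorphism p : E → V(μ) with range(i) = ker(p), such that no sl₂-module homomorphism s : V(μ) → E satisfies p ∘ s = id_{V(μ)}, if and only if λ is an integer with λ ≤ 0 and μ = 2−λ. -/

import Mathlib

/-!
Context: sl₂ over ℂ with basis {e,f,h}, [h,e]=2e, [h,f]=-2f, [e,f]=h.
For λ ∈ ℂ, the lowest-weight Verma module V(λ) has ℂ-basis {w_k}_{k∈ℕ} with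
e·w_k = w_{k+1}, h·w_k = (λ+2k)·w_k, f·w_k = −k(λ+k−1)·w_{k−1}.
-/

noncomputable section

universe u

/-- Carrier of the lowest-weight Verma module `V(λ)`:
formal ℂ-linear combinations of the basis vectors `w_k`, `k ∈ ℕ`. -/
abbrev VermaCarrier : Type := ℕ →₀ ℂ

/-- The basis vector `w_k` of the Verma module. -/
def w (k : ℕ) : VermaCarrier := Finsupp.single k 1

/-- Action of `e` on `V(λ)`: `e · w_k = w_{k+1}`. -/
def vermaE : VermaCarrier →ₗ[ℂ] VermaCarrier := Finsupp.lmapDomain ℂ ℂ (· + 1)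

/-- Action of `h` on `V(λ)`: `h · w_k = (λ + 2k) • w_k`. -/
def vermaH (lam : ℂ) : VermaCarrier →ₗ[ℂ] VermaCarrier :=
  Finsupp.lsum ℂ fun k => (lam + 2 * (k : ℂ)) • Finsupp.lsingle k

/-- Action of `f` on `V(λ)`: `f · w_k = −k(λ+k−1) • w_{k−1}` (with `w_{-1} = 0`). -/
def vermaF (lam : ℂ) : VermaCarrier →ₗ[ℂ] VermaCarrier :=
  Finsupp.lsum ℂ fun k => (-(k : ℂ) * (lam + (k : ℂ) - 1)) • Finsupp.lsingle (k - 1)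

/-- An sl₂-module over ℂ: a ℂ-module with endomorphisms `e`, `f`, `h`
satisfying `[h,e] = 2e`, `[h,f] = −2f`, `[e,f] = h`. -/
structure Sl2Module : Type (u + 1) where
  carrier : Type u
  [acg : AddCommGroup carrier]
  [mc : Module ℂ carrier]
  e : carrier →ₗ[ℂ] carrier
  f : carrier →ₗ[ℂ] carrier
  h : carrier →ₗ[ℂ] carrier
  rel_he : h ∘ₗ e - e ∘ₗ h = (2 : ℂ) • e
  rel_hf : h ∘ₗ f - f ∘ₗ h = (-2 : ℂ) • f
  rel_ef : e ∘ₗ f - f ∘ₗ e = h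

attribute [instance] Sl2Module.acg Sl2Module.mc

/- ## auxiliary lemmas -/

lemma vermaE_single (k : ℕ) (c : ℂ) : vermaE (Finsupp.single k c) = Finsupp.single (k+1) c := by
  simp [vermaE, Finsupp.mapDomain_single]

lemma vermaH_single (lam : ℂ) (k : ℕ) (c : ℂ) :
    vermaH lam (Finsupp.single k c) = (lam + 2*(k:ℂ)) • Finsupp.single k c := by
  simp [vermaH, Finsupp.smul_single]

lemma vermaF_single (lam : ℂ) (k : ℕ) (c : ℂ) :
    vermaF lam (Finsupp.single k c) = (-(k:ℂ) * (lam + (k:ℂ) - 1)) • Finsupp.single (k-1) c := by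
  simp [vermaF, Finsupp.smul_single]

lemma verma_rel_he (lam : ℂ) :
    vermaH lam ∘ₗ vermaE - vermaE ∘ₗ vermaH lam = (2:ℂ) • vermaE := by
  refine Finsupp.lhom_ext fun k c => ?_
  simp only [LinearMap.sub_apply, LinearMap.comp_apply, LinearMap.smul_apply,
    vermaE_single, vermaH_single, map_smul, vermaE_single]
  rw [← sub_smul]
  congr 1
  push_cast
  ring

lemma verma_rel_hf (lam : ℂ) :
    vermaH lam ∘ₗ vermaF lam - vermaF lam ∘ₗ vermaH lam = (-2:ℂ) • vermaF lam := by
  refine Finsupp.lhom_ext fun k c => ?_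
  simp only [LinearMap.sub_apply, LinearMap.comp_apply, LinearMap.smul_apply,
    vermaF_single, vermaH_single, map_smul]
  rw [smul_smul, smul_smul, ← sub_smul, smul_smul]
  cases k with
  | zero => norm_num
  | succ j =>
    congr 1
    push_cast [Nat.succ_sub_one]
    ring

lemma verma_rel_ef (lam : ℂ) :
    vermaE ∘ₗ vermaF lam - vermaF lam ∘ₗ vermaE = vermaH lam := by
  refine Finsupp.lhom_ext fun k c => ?_
  simp only [LinearMap.sub_apply, LinearMap.comp_apply,
    vermaE_single, vermaF_single, vermaH_single, map_smul]
  cases k with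
  | zero => norm_num
  | succ j =>
    simp only [Nat.add_sub_cancel]
    rw [← sub_smul]
    congr 1
    push_cast
    ring

def VermaModule (lam : ℂ) : Sl2Module.{0} :=
  { carrier := VermaCarrier
    e := vermaE
    f := vermaF lam
    h := vermaH lam
    rel_he := verma_rel_he lam
    rel_hf := verma_rel_hf lam
    rel_ef := verma_rel_ef lam }

lemma vermaH_apply (lam : ℂ) (x : VermaCarrier) (j : ℕ) :
    (vermaH lam x) j = (lam + 2*(j:ℂ)) * x j := by
  induction x using Finsupp.induction_linear with
  | zero => simp
  | add a b ha hb => simp [ha, hb, mul_add]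
  | single a b =>
    rw [vermaH_single]
    rcases eq_or_ne a j with rfl | hne
    · simp
    · simp [Finsupp.single_apply, hne]

lemma vermaF_apply_eq_zero (n : ℕ) (x : VermaCarrier) :
    (vermaF (-(n:ℂ)) x) n = 0 := by
  induction x using Finsupp.induction_linear with
  | zero => simp
  | add a b ha hb => simp [ha, hb]
  | single a b =>
    rw [vermaF_single]
    rcases eq_or_ne (a-1) n with he | hne
    · rcases Nat.eq_zero_or_pos a with rfl | hpos
      · simp
      · have : a = n + 1 := by omega
        subst this
        have hz : (-((n:ℂ)+1) * (-(n:ℂ) + ((n:ℂ)+1) - 1)) = 0 := by ring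
        push_cast
        simp [hz]
    · simp [Finsupp.single_apply, hne]

lemma he_apply (M : Sl2Module.{u}) (x : M.carrier) :
    M.h (M.e x) = M.e (M.h x) + (2:ℂ) • M.e x := by
  have := LinearMap.congr_fun M.rel_he x
  simp only [LinearMap.sub_apply, LinearMap.comp_apply, LinearMap.smul_apply] at this
  rw [sub_eq_iff_eq_add] at this
  rw [this]; abel

lemma hf_apply (M : Sl2Module.{u}) (x : M.carrier) :
    M.h (M.f x) = M.f (M.h x) - (2:ℂ) • M.f x := by
  have := LinearMap.congr_fun M.rel_hf x
  simp only [LinearMap.sub_apply, LinearMap.comp_apply, LinearMap.smul_apply] at this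
  rw [sub_eq_iff_eq_add] at this
  rw [this]; module

lemma fe_apply (M : Sl2Module.{u}) (x : M.carrier) :
    M.f (M.e x) = M.e (M.f x) - M.h x := by
  have := LinearMap.congr_fun M.rel_ef x
  simp only [LinearMap.sub_apply, LinearMap.comp_apply] at this
  rw [sub_eq_iff_eq_add] at this
  rw [this]; abel

lemma splitting (M : Sl2Module.{u}) (mu : ℂ) (m : M.carrier)
    (hm : M.h m = mu • m) (hfm : M.f m = 0) :
    ∃ s : VermaCarrier →ₗ[ℂ] M.carrier,
      s ∘ₗ vermaE = M.e ∘ₗ s ∧ s ∘ₗ vermaF mu = M.f ∘ₗ s ∧ s ∘ₗ vermaH mu = M.h ∘ₗ s ∧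
      ∀ k : ℕ, s (w k) = (M.e ^ k) m := by
  set v : ℕ → M.carrier := fun k => (M.e ^ k) m with hv
  have hv0 : v 0 = m := by simp [hv]
  have hvs : ∀ k, v (k+1) = M.e (v k) := by
    intro k
    simp only [hv, pow_succ', Module.End.mul_apply]
  have hvh : ∀ k, M.h (v k) = (mu + 2*(k:ℂ)) • v k := by
    intro k
    induction k with
    | zero => simpa [hv0] using hm
    | succ j ih =>
      rw [hvs, he_apply, ih, map_smul, ← add_smul]
      congr 1
      push_cast
      ring
  have hvf : ∀ k, M.f (v k) = (-(k:ℂ)*(mu+(k:ℂ)-1)) • v (k-1) := by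
    intro k
    induction k with
    | zero => simp [hv0, hfm]
    | succ j ih =>
      rw [hvs, fe_apply, ih, hvh, map_smul]
      cases j with
      | zero =>
        simp only [Nat.zero_sub, Nat.cast_zero, Nat.add_sub_cancel]
        rw [hv0]
        norm_num
      | succ i =>
        simp only [Nat.add_sub_cancel, hvs]
        rw [← sub_smul]
        congr 1
        push_cast
        ring
  refine ⟨Finsupp.lsum ℂ fun k => LinearMap.toSpanSingleton ℂ M.carrier (v k), ?_, ?_, ?_, ?_⟩
  · refine Finsupp.lhom_ext fun k c => ?_
    simp [vermaE_single, Finsupp.lsum_single, LinearMap.toSpanSingleton_apply, hvs]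
  · refine Finsupp.lhom_ext fun k c => ?_
    simp only [LinearMap.comp_apply, vermaF_single, map_smul, Finsupp.lsum_single,
      LinearMap.toSpanSingleton_apply, hvf]
    rw [smul_comm]
  · refine Finsupp.lhom_ext fun k c => ?_
    simp only [LinearMap.comp_apply, vermaH_single, map_smul, Finsupp.lsum_single,
      LinearMap.toSpanSingleton_apply, hvh]
    rw [smul_comm]
  · intro k
    simp [w, Finsupp.lsum_single, LinearMap.toSpanSingleton_apply, hv]

lemma splitting_full (M : Sl2Module.{u}) (p : M.carrier →ₗ[ℂ] VermaCarrier) (mu : ℂ)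
    (hpE : p ∘ₗ M.e = vermaE ∘ₗ p)
    (m : M.carrier) (hm : M.h m = mu • m) (hfm : M.f m = 0) (hpm : p m = w 0) :
    ∃ s : VermaCarrier →ₗ[ℂ] M.carrier,
      s ∘ₗ vermaE = M.e ∘ₗ s ∧ s ∘ₗ vermaF mu = M.f ∘ₗ s ∧ s ∘ₗ vermaH mu = M.h ∘ₗ s ∧
      p ∘ₗ s = LinearMap.id := by
  obtain ⟨s, h1, h2, h3, hw⟩ := splitting M mu m hm hfm
  refine ⟨s, h1, h2, h3, ?_⟩
  have key : ∀ k, p (s (w k)) = w k := by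
    intro k
    rw [hw]
    induction k with
    | zero => simpa using hpm
    | succ j ih =>
      rw [pow_succ', Module.End.mul_apply]
      have := LinearMap.congr_fun hpE ((M.e ^ j) m)
      simp only [LinearMap.comp_apply] at this
      rw [this, ih]
      simp [w, vermaE_single]
  refine Finsupp.lhom_ext fun k c => ?_
  have hsing : (Finsupp.single k c : VermaCarrier) = c • w k := by
    simp [w, Finsupp.smul_single]
  rw [hsing]
  simp only [LinearMap.comp_apply, map_smul, key k, LinearMap.id_apply]

/- ## the extension module for the backward direction -/

def extS (n : ℕ) : VermaCarrier →ₗ[ℂ] VermaCarrier := Finsupp.lmapDomain ℂ ℂ (· + n)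

lemma extS_single (n k : ℕ) (c : ℂ) :
    extS n (Finsupp.single k c) = Finsupp.single (k+n) c := by
  simp [extS, Finsupp.mapDomain_single]

abbrev PP : Type := VermaCarrier × VermaCarrier

def pE : PP →ₗ[ℂ] PP := vermaE.prodMap vermaE
def pH (n : ℕ) : PP →ₗ[ℂ] PP := (vermaH (-(n:ℂ))).prodMap (vermaH ((n:ℂ)+2))
def pF (n : ℕ) : PP →ₗ[ℂ] PP :=
  LinearMap.prod (vermaF (-(n:ℂ)) ∘ₗ LinearMap.fst ℂ _ _ + extS n ∘ₗ LinearMap.snd ℂ _ _)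
    (vermaF ((n:ℂ)+2) ∘ₗ LinearMap.snd ℂ _ _)

lemma pE_apply (x : PP) : pE x = (vermaE x.1, vermaE x.2) := rfl
lemma pH_apply (n : ℕ) (x : PP) :
    pH n x = (vermaH (-(n:ℂ)) x.1, vermaH ((n:ℂ)+2) x.2) := rfl
lemma pF_apply (n : ℕ) (x : PP) :
    pF n x = (vermaF (-(n:ℂ)) x.1 + extS n x.2, vermaF ((n:ℂ)+2) x.2) := rfl

lemma hS (n : ℕ) (x : VermaCarrier) :
    vermaH (-(n:ℂ)) (extS n x) = extS n (vermaH ((n:ℂ)+2) x) - (2:ℂ) • extS n x := by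
  induction x using Finsupp.induction_linear with
  | zero => simp
  | add a b ha hb => simp only [map_add, ha, hb, smul_add]; abel
  | single a b =>
    rw [extS_single, vermaH_single, vermaH_single, map_smul, extS_single, ← sub_smul]
    congr 1
    push_cast
    ring

lemma eS (n : ℕ) (x : VermaCarrier) :
    vermaE (extS n x) = extS n (vermaE x) := by
  induction x using Finsupp.induction_linear with
  | zero => simp
  | add a b ha hb => simp [ha, hb]
  | single a b =>
    rw [extS_single, vermaE_single, vermaE_single, extS_single, add_right_comm]

lemma pp_rel_he (n : ℕ) : pH n ∘ₗ pE - pE ∘ₗ pH n = (2:ℂ) • pE := by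
  refine LinearMap.ext fun x => ?_
  have h1 := LinearMap.congr_fun (verma_rel_he (-(n:ℂ))) x.1
  have h2 := LinearMap.congr_fun (verma_rel_he ((n:ℂ)+2)) x.2
  simp only [LinearMap.sub_apply, LinearMap.comp_apply, LinearMap.smul_apply] at h1 h2
  simp only [LinearMap.sub_apply, LinearMap.comp_apply, LinearMap.smul_apply,
    pE_apply, pH_apply, Prod.ext_iff, Prod.fst_sub, Prod.snd_sub, Prod.smul_fst,
    Prod.smul_snd]
  exact ⟨h1, h2⟩

lemma pp_rel_hf (n : ℕ) : pH n ∘ₗ pF n - pF n ∘ₗ pH n = (-2:ℂ) • pF n := by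
  refine LinearMap.ext fun x => ?_
  have h1 := LinearMap.congr_fun (verma_rel_hf (-(n:ℂ))) x.1
  have h2 := LinearMap.congr_fun (verma_rel_hf ((n:ℂ)+2)) x.2
  simp only [LinearMap.sub_apply, LinearMap.comp_apply, LinearMap.smul_apply] at h1 h2
  have h3 := hS n x.2
  simp only [LinearMap.sub_apply, LinearMap.comp_apply, LinearMap.smul_apply,
    pF_apply, pH_apply, Prod.ext_iff, Prod.fst_sub, Prod.snd_sub, Prod.smul_fst,
    Prod.smul_snd, map_add, h3]
  constructor
  · linear_combination (norm := module) h1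
  · linear_combination (norm := module) h2

lemma pp_rel_ef (n : ℕ) : pE ∘ₗ pF n - pF n ∘ₗ pE = pH n := by
  refine LinearMap.ext fun x => ?_
  have h1 := LinearMap.congr_fun (verma_rel_ef (-(n:ℂ))) x.1
  have h2 := LinearMap.congr_fun (verma_rel_ef ((n:ℂ)+2)) x.2
  simp only [LinearMap.sub_apply, LinearMap.comp_apply] at h1 h2
  have h3 := eS n x.2
  simp only [LinearMap.sub_apply, LinearMap.comp_apply, pE_apply, pF_apply, pH_apply,
    Prod.ext_iff, Prod.fst_sub, Prod.snd_sub, map_add, h3]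
  constructor
  · rw [← h1]; abel
  · rw [← h2]

def lift (g : PP →ₗ[ℂ] PP) : ULift.{u} PP →ₗ[ℂ] ULift.{u} PP :=
  ULift.moduleEquiv.symm.toLinearMap ∘ₗ g ∘ₗ ULift.moduleEquiv.toLinearMap

lemma lift_apply (g : PP →ₗ[ℂ] PP) (x : ULift.{u} PP) : lift g x = ULift.up (g x.down) := rfl

lemma lift_comp (a b : PP →ₗ[ℂ] PP) : lift.{u} (a ∘ₗ b) = lift a ∘ₗ lift b := rfl

lemma lift_sub (a b : PP →ₗ[ℂ] PP) : lift.{u} (a - b) = lift a - lift b := rfl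

lemma lift_smul (c : ℂ) (a : PP →ₗ[ℂ] PP) : lift.{u} (c • a) = c • lift a := rfl

lemma up_add (x y : PP) : (ULift.up (x + y) : ULift.{u} PP) = ULift.up x + ULift.up y := rfl

lemma up_smul (c : ℂ) (x : PP) : (ULift.up (c • x) : ULift.{u} PP) = c • ULift.up x := rfl

def ExtModule (n : ℕ) : Sl2Module.{u} :=
  { carrier := ULift.{u} PP
    e := lift pE
    f := lift (pF n)
    h := lift (pH n)
    rel_he := by rw [← lift_comp, ← lift_comp, ← lift_sub, pp_rel_he, lift_smul]
    rel_hf := by rw [← lift_comp, ← lift_comp, ← lift_sub, pp_rel_hf, lift_smul]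
    rel_ef := by rw [← lift_comp, ← lift_comp, ← lift_sub, pp_rel_ef] }

/-- a non-split extension `0 → V(λ) → E → V(μ) → 0` with `h` acting
semisimply on `E` exists iff `λ` is a nonpositive integer and `μ = 2 − λ`. -/
theorem stmt3 (lam mu : ℂ) :
    (∃ E : Sl2Module.{u},
      ∃ (i : VermaCarrier →ₗ[ℂ] E.carrier) (p : E.carrier →ₗ[ℂ] VermaCarrier),
        Submodule.span ℂ {v : E.carrier | ∃ c : ℂ, E.h v = c • v} = ⊤ ∧
        (i ∘ₗ vermaE = E.e ∘ₗ i ∧ i ∘ₗ vermaF lam = E.f ∘ₗ i ∧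
          i ∘ₗ vermaH lam = E.h ∘ₗ i) ∧
        (p ∘ₗ E.e = vermaE ∘ₗ p ∧ p ∘ₗ E.f = vermaF mu ∘ₗ p ∧
          p ∘ₗ E.h = vermaH mu ∘ₗ p) ∧
        Function.Injective i ∧ Function.Surjective p ∧
        LinearMap.range i = LinearMap.ker p ∧
        ¬∃ s : VermaCarrier →ₗ[ℂ] E.carrier,
            s ∘ₗ vermaE = E.e ∘ₗ s ∧ s ∘ₗ vermaF mu = E.f ∘ₗ s ∧
            s ∘ₗ vermaH mu = E.h ∘ₗ s ∧ p ∘ₗ s = LinearMap.id) ↔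
    ((∃ n : ℕ, lam = -(n : ℂ)) ∧ mu = 2 - lam) := by
  constructor
  · rintro ⟨E, i, p, hspan, ⟨hiE, hiF, hiH⟩, ⟨hpE, hpF, hpH⟩, hi, hp, hrange, hnosplit⟩
    have hpH' : ∀ x, p (E.h x) = vermaH mu (p x) := fun x => by
      simpa using LinearMap.congr_fun hpH x
    have hpF' : ∀ x, p (E.f x) = vermaF mu (p x) := fun x => by
      simpa using LinearMap.congr_fun hpF x
    have hiH' : ∀ x, i (vermaH lam x) = E.h (i x) := fun x => by
      simpa using LinearMap.congr_fun hiH x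
    have hiF' : ∀ x, i (vermaF lam x) = E.f (i x) := fun x => by
      simpa using LinearMap.congr_fun hiF x
    obtain ⟨m₀, hm₀⟩ := hp (w 0)
    have hmem : m₀ ∈ Submodule.span ℂ {v : E.carrier | ∃ c : ℂ, E.h v = c • v} := by
      rw [hspan]; trivial
    have key : ∀ x ∈ Submodule.span ℂ {v : E.carrier | ∃ c : ℂ, E.h v = c • v},
        ∃ m : E.carrier, E.h m = mu • m ∧ (p m) 0 = (p x) 0 := by
      intro x hx
      induction hx using Submodule.span_induction with
      | mem v hv =>
        obtain ⟨c, hc⟩ := hv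
        rcases eq_or_ne c mu with rfl | hne
        · exact ⟨v, hc, rfl⟩
        · refine ⟨0, by simp, ?_⟩
          have h1 : vermaH mu (p v) = c • p v := by rw [← hpH' v, hc, map_smul]
          have h2 := congrArg (fun y : VermaCarrier => y 0) h1
          simp only [vermaH_apply, Finsupp.smul_apply, smul_eq_mul, Nat.cast_zero] at h2
          have h3 : (p v) 0 = 0 := by
            have hsub : (mu - c) * (p v) 0 = 0 := by linear_combination h2
            rcases mul_eq_zero.1 hsub with hh | hh
            · exact absurd (by linear_combination -hh) hne
            · exact hh
          simp [h3]
      | zero => exact ⟨0, by simp, by simp⟩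
      | add a b _ _ iha ihb =>
        obtain ⟨ma, h1, h2⟩ := iha
        obtain ⟨mb, h3, h4⟩ := ihb
        exact ⟨ma + mb, by rw [map_add, h1, h3, smul_add],
          by simp only [map_add, Finsupp.add_apply, h2, h4]⟩
      | smul c a _ iha =>
        obtain ⟨ma, h1, h2⟩ := iha
        exact ⟨c • ma, by rw [map_smul, h1, smul_comm],
          by simp only [map_smul, Finsupp.smul_apply, h2]⟩
    obtain ⟨m, hmh, hm0⟩ := key m₀ hmem
    rw [hm₀] at hm0
    have hw00 : (w 0 : VermaCarrier) 0 = 1 := by simp [w]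
    have hpm : p m = w 0 := by
      have heig : vermaH mu (p m) = mu • p m := by rw [← hpH' m, hmh, map_smul]
      ext j
      cases j with
      | zero => rw [hm0, hw00]
      | succ k =>
        have h2 := congrArg (fun y : VermaCarrier => y (k+1)) heig
        simp only [vermaH_apply, Finsupp.smul_apply, smul_eq_mul] at h2
        have h3 : (2*((k:ℂ)+1)) * (p m) (k+1) = 0 := by
          push_cast at h2 ⊢
          linear_combination h2
        have hne : (2*((k:ℂ)+1)) ≠ 0 :=
          mul_ne_zero two_ne_zero (Nat.cast_add_one_ne_zero k)
        have hz : (p m) (k+1) = 0 := by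
          rcases mul_eq_zero.1 h3 with hh | hh
          · exact absurd hh hne
          · exact hh
        rw [hz]
        simp [w, Finsupp.single_apply]
    have hpf : p (E.f m) = 0 := by
      rw [hpF' m, hpm, w, vermaF_single]
      norm_num
    have hker : E.f m ∈ LinearMap.ker p := hpf
    rw [← hrange] at hker
    obtain ⟨z, hz⟩ := hker
    have hhfm : E.h (E.f m) = (mu - 2) • E.f m := by
      rw [hf_apply, hmh, map_smul, sub_smul]
    have hhz : vermaH lam z = (mu - 2) • z := by
      apply hi
      rw [hiH' z, hz, hhfm, ← hz, ← map_smul]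
    have hwt : ∀ j : ℕ, (lam + 2*(j:ℂ)) * z j = (mu - 2) * z j := by
      intro j
      have := congrArg (fun y : VermaCarrier => y j) hhz
      simpa [vermaH_apply] using this
    by_cases hex : ∃ k : ℕ, mu - 2 = lam + 2*(k:ℂ)
    · obtain ⟨k₀, hk⟩ := hex
      by_cases hlk : lam = -(k₀:ℂ)
      · refine ⟨⟨k₀, hlk⟩, ?_⟩
        rw [hlk] at hk ⊢
        linear_combination hk
      · exfalso
        have hzj : ∀ j, j ≠ k₀ → z j = 0 := by
          intro j hj
          have hne : lam + 2*(j:ℂ) ≠ mu - 2 := by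
            rw [hk]
            intro hcon
            apply hj
            have : (j:ℂ) = (k₀:ℂ) := by linear_combination hcon/2
            exact_mod_cast this
          have hmz : (lam + 2*(j:ℂ) - (mu-2)) * z j = 0 := by linear_combination hwt j
          rcases mul_eq_zero.1 hmz with hh | hh
          · exact absurd (by linear_combination hh) hne
          · exact hh
        have hzz : z = (z k₀) • w k₀ := by
          ext j
          rcases eq_or_ne j k₀ with rfl | hj
          · simp [w]
          · simp [hzj j hj, w, Finsupp.single_apply, Ne.symm hj]
        set d : ℂ := z k₀ / (((k₀:ℂ)+1) * (lam + (k₀:ℂ))) with hd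
        have hA : ((k₀:ℂ)+1) * (lam + (k₀:ℂ)) ≠ 0 :=
          mul_ne_zero (Nat.cast_add_one_ne_zero k₀)
            (fun hc => hlk (by linear_combination hc))
        have hmu' : mu = lam + 2*(k₀:ℂ) + 2 := by linear_combination hk
        set m' : E.carrier := m + d • i (w (k₀+1)) with hm'
        have hvw : vermaH lam (w (k₀+1)) = mu • w (k₀+1) := by
          simp only [w, vermaH_single, hmu']
          congr 1
          push_cast
          ring
        have h1 : E.h m' = mu • m' := by
          rw [hm', map_add, hmh, map_smul, ← hiH', hvw, map_smul, smul_add, smul_comm]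
        have hfvw : vermaF lam (w (k₀+1)) = (-((k₀:ℂ)+1) * (lam + (k₀:ℂ))) • w k₀ := by
          simp only [w, vermaF_single, Nat.add_sub_cancel]
          congr 1
          push_cast
          ring
        have hcoef : z k₀ + d * (-((k₀:ℂ)+1) * (lam + (k₀:ℂ))) = 0 := by
          rw [hd, show -((k₀:ℂ)+1) * (lam + (k₀:ℂ)) = -(((k₀:ℂ)+1) * (lam + (k₀:ℂ))) by ring,
            mul_neg, div_mul_cancel₀ _ hA, add_neg_cancel]
        have hzero : z + (d * (-((k₀:ℂ)+1) * (lam + (k₀:ℂ)))) • w k₀ = 0 := by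
          rw [hzz, ← add_smul, hcoef, zero_smul]
        have h2 : E.f m' = 0 := by
          rw [hm', map_add, ← hz, map_smul, ← hiF', hfvw, ← map_smul, ← map_add,
            smul_smul, hzero, map_zero]
        have hpi : ∀ x : VermaCarrier, p (i x) = 0 := by
          intro x
          have hx : i x ∈ LinearMap.ker p := by
            rw [← hrange]
            exact ⟨x, rfl⟩
          exact hx
        have h3 : p m' = w 0 := by
          rw [hm', map_add, map_smul, hpm, hpi, smul_zero, add_zero]
        obtain ⟨s, a1, a2, a3, a4⟩ := splitting_full E p mu hpE m' h1 h2 h3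
        exact hnosplit ⟨s, a1, a2, a3, a4⟩
    · exfalso
      have hz0 : z = 0 := by
        ext j
        have hne : lam + 2*(j:ℂ) ≠ mu - 2 := fun hcon => hex ⟨j, hcon.symm⟩
        have hmz : (lam + 2*(j:ℂ) - (mu-2)) * z j = 0 := by linear_combination hwt j
        rcases mul_eq_zero.1 hmz with hh | hh
        · exact absurd (by linear_combination hh) hne
        · simpa using hh
      have hfm : E.f m = 0 := by rw [← hz, hz0, map_zero]
      obtain ⟨s, a1, a2, a3, a4⟩ := splitting_full E p mu hpE m hmh hfm hpm
      exact hnosplit ⟨s, a1, a2, a3, a4⟩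
  · rintro ⟨⟨n, rfl⟩, rfl⟩
    simp only [show (2:ℂ) - -(n:ℂ) = (n:ℂ)+2 from by ring]
    refine ⟨ExtModule.{u} n,
      ULift.moduleEquiv.symm.toLinearMap ∘ₗ LinearMap.inl ℂ VermaCarrier VermaCarrier,
      LinearMap.snd ℂ VermaCarrier VermaCarrier ∘ₗ ULift.moduleEquiv.toLinearMap,
      ?_, ⟨?_, ?_, ?_⟩, ⟨?_, ?_, ?_⟩, ?_, ?_, ?_, ?_⟩
    · -- span of eigenvectors
      rw [Submodule.eq_top_iff']
      intro x
      have hx : x = ULift.up ((x.down.1, 0) : PP) + ULift.up ((0, x.down.2) : PP) := by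
        rcases x with ⟨⟨a, b⟩⟩
        show ULift.up ((a, b) : PP) = _
        rw [← up_add]
        exact congrArg ULift.up (by simp)
      rw [hx]
      refine add_mem ?_ ?_
      · induction x.down.1 using Finsupp.induction_linear with
        | zero => exact zero_mem _
        | add a b ha hb =>
          have : (ULift.up ((a + b, 0) : PP) : ULift PP)
              = ULift.up ((a, 0) : PP) + ULift.up ((b, 0) : PP) := by
            rw [← up_add]
            exact congrArg ULift.up (by simp)
          rw [this]
          exact add_mem ha hb
        | single k c =>
          refine Submodule.subset_span ⟨-(n:ℂ) + 2*(k:ℂ), ?_⟩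
          show ULift.up (pH n ((Finsupp.single k c, 0) : PP)) = _
          rw [pH_apply]
          simp only [vermaH_single, map_zero]
          erw [← up_smul]
          exact congrArg ULift.up (by simp)
      · induction x.down.2 using Finsupp.induction_linear with
        | zero => exact zero_mem _
        | add a b ha hb =>
          have : (ULift.up ((0, a + b) : PP) : ULift PP)
              = ULift.up ((0, a) : PP) + ULift.up ((0, b) : PP) := by
            rw [← up_add]
            exact congrArg ULift.up (by simp)
          rw [this]
          exact add_mem ha hb
        | single k c =>
          refine Submodule.subset_span ⟨(n:ℂ) + 2 + 2*(k:ℂ), ?_⟩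
          show ULift.up (pH n ((0, Finsupp.single k c) : PP)) = _
          rw [pH_apply]
          simp only [vermaH_single, map_zero]
          erw [← up_smul]
          exact congrArg ULift.up (by simp)
    · refine LinearMap.ext fun x => ?_
      show ULift.up ((vermaE x, 0) : PP) = ULift.up (pE ((x, 0) : PP))
      rw [pE_apply]
      simp
    · refine LinearMap.ext fun x => ?_
      show ULift.up ((vermaF (-(n:ℂ)) x, 0) : PP) = ULift.up (pF n ((x, 0) : PP))
      rw [pF_apply]
      simp
    · refine LinearMap.ext fun x => ?_
      show ULift.up ((vermaH (-(n:ℂ)) x, 0) : PP) = ULift.up (pH n ((x, 0) : PP))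
      rw [pH_apply]
      simp
    · rfl
    · rfl
    · rfl
    · intro a b hab
      exact congrArg (fun t : ULift.{u} PP => t.down.1) hab
    · intro y
      exact ⟨ULift.up ((0, y) : PP), rfl⟩
    · ext x
      simp only [LinearMap.mem_range, LinearMap.mem_ker]
      constructor
      · rintro ⟨v, rfl⟩
        rfl
      · intro hx
        exact ⟨x.down.1, congrArg ULift.up (Prod.ext rfl hx.symm)⟩
    · rintro ⟨s, hsE, hsF, hsH, hsP⟩
      have hs2 : (s (w 0)).down.2 = w 0 := LinearMap.congr_fun hsP (w 0)
      have hF0 : vermaF ((n:ℂ)+2) (w 0) = 0 := by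
        rw [w, vermaF_single]
        norm_num
      have h1 := LinearMap.congr_fun hsF (w 0)
      simp only [LinearMap.comp_apply, hF0, map_zero] at h1
      have h2 : pF n ((s (w 0)).down) = 0 := congrArg ULift.down h1.symm
      have h3 : vermaF (-(n:ℂ)) ((s (w 0)).down.1) + extS n (w 0) = 0 := by
        have h4 := congrArg Prod.fst h2
        rw [pF_apply] at h4
        simpa [hs2] using h4
      have h5 : extS n (w 0) = Finsupp.single n 1 := by
        rw [w, extS_single, zero_add]
      have h6 := congrArg (fun y : VermaCarrier => y n) h3
      simp only [Finsupp.add_apply, vermaF_apply_eq_zero, h5,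
        Finsupp.single_eq_same, Finsupp.coe_zero, Pi.zero_apply, zero_add] at h6
      exact one_ne_zero h6

end
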